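/- For every z ∈ (0,1), set α = z(z+3)²/(2(z+1)³) and β = z²(z+3)/4. Then αβ = z³(z+3)³/(8(z+1)³) and (1−α)(1−β) = (1−z)³(z+2)³/(8(z+1)³), and consequently (αβ)^{1/3} + ((1−α)(1−β))^{1/3} = 1, where x^{1/3} denotes the real cube root of x > 0. -/
import Mathlib

lemma cube_rpow_third (a : ℝ) (ha : 0 ≤ a) : (a ^ 3) ^ ((1:ℝ)/3) = a := by
  rw [← Real.rpow_natCast a 3, ← Real.rpow_mul ha]
  norm_num

/-- For `z ∈ (0,1)` and Ramanujan's parametrization `α = z(z+3)²/(2(z+1)³)`,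
`β = z²(z+3)/4`, one has `αβ = z³(z+3)³/(8(z+1)³)`,
`(1-α)(1-β) = (1-z)³(z+2)³/(8(z+1)³)`, and hence
`(αβ)^{1/3} + ((1-α)(1-β))^{1/3} = 1`. -/
theorem param_cube_root_identity (z : ℝ) (hz : z ∈ Set.Ioo (0:ℝ) 1)
    (α β : ℝ) (hαz : α = z * (z + 3)^2 / (2 * (z + 1)^3)) (hβz : β = z^2 * (z + 3) / 4) :
    α * β = z^3 * (z + 3)^3 / (8 * (z + 1)^3) ∧
    (1 - α) * (1 - β) = (1 - z)^3 * (z + 2)^3 / (8 * (z + 1)^3) ∧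
    (α * β) ^ ((1:ℝ)/3) + ((1 - α) * (1 - β)) ^ ((1:ℝ)/3) = 1 := by
  obtain ⟨hz0, hz1⟩ := hz
  have h1 : (0:ℝ) < z + 1 := by linarith
  have h1' : (z + 1) ≠ 0 := ne_of_gt h1
  have h1'' : (z + 1)^3 ≠ 0 := pow_ne_zero _ h1'
  have hab : α * β = z^3 * (z + 3)^3 / (8 * (z + 1)^3) := by
    subst hαz hβz; field_simp; ring
  have hcd : (1 - α) * (1 - β) = (1 - z)^3 * (z + 2)^3 / (8 * (z + 1)^3) := by
    subst hαz hβz; field_simp; ring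
  refine ⟨hab, hcd, ?_⟩
  have e1 : α * β = (z * (z + 3) / (2 * (z + 1)))^3 := by
    rw [hab]; field_simp; ring
  have e2 : (1 - α) * (1 - β) = ((1 - z) * (z + 2) / (2 * (z + 1)))^3 := by
    rw [hcd]; field_simp; ring
  rw [e1, e2, cube_rpow_third _ (by positivity),
    cube_rpow_third _ (div_nonneg (by nlinarith) (by linarith))]
  field_simp
  ring
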